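/- Let U ⊆ ℝ² be open, let u, v : U → ℝ be twice continuously differentiable, let ρ, τ : U → ℝ satisfy ρ² + τ² < 1 pointwise on U, and suppose the Beltrami-equation relation (∂u/∂x − ∂v/∂y) + i(∂v/∂x + ∂u/∂y) = (ρ + iτ)·((∂u/∂x + ∂v/∂y) + i(∂v/∂x − ∂u/∂y)) holds at every point of U. Define α₁ = ((ρ−1)² + τ²)/(1 − ρ² − τ²), α₂ = −2τ/(1 − ρ² − τ²), α₃ = ((ρ+1)² + τ²)/(1 − ρ² − τ²) pointwise on U. Then ∇·(A∇u) = 0 and ∇·(A∇v) = 0 on U, where A = [[α₁, α₂], [α₂, α₃]]; explicitly, ∂/∂x(α₁·∂u/∂x + α₂·∂u/∂y) + ∂/∂y(α₂·∂u/∂x + α₃·∂u/∂y) = 0 and ∂/∂x(α₁·∂v/∂x + α₂·∂v/∂y) + ∂/∂y(α₂·∂v/∂x + α₃·∂v/∂y) = 0 at every point of U. -/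

import Mathlib

/-- Partial derivative in the `x`-direction of a function on `ℝ × ℝ`. -/
noncomputable def pdx (u : ℝ × ℝ → ℝ) (p : ℝ × ℝ) : ℝ :=
  fderiv ℝ u p (1, 0)

/-- Partial derivative in the `y`-direction of a function on `ℝ × ℝ`. -/
noncomputable def pdy (u : ℝ × ℝ → ℝ) (p : ℝ × ℝ) : ℝ :=
  fderiv ℝ u p (0, 1)

/-!
Where `ρ² + τ² < 1` the Beltrami relation can be solved for `A`: it says exactly that
`A∇u = (v_y, -v_x)` and `A∇v = (-u_y, u_x)`. A rotated gradient `(w_y, -w_x)` of a `C²`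
function is divergence free by the symmetry of mixed partials, which gives both equations.
-/

open Filter Topology

theorem ContDiffAt.fderiv_apply_comm {E F : Type*} [NormedAddCommGroup E] [NormedSpace ℝ E]
    [NormedAddCommGroup F] [NormedSpace ℝ F] {f : E → F} {x : E} (hf : ContDiffAt ℝ 2 f x)
    (v w : E) :
    fderiv ℝ (fun y => fderiv ℝ f y v) x w = fderiv ℝ (fun y => fderiv ℝ f y w) x v := by
  have hdiff : DifferentiableAt ℝ (fderiv ℝ f) x :=
    (hf.fderiv_right (m := 1) (by norm_num)).differentiableAt (by norm_num)
  have happly (z : E) :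
      fderiv ℝ (fun y => fderiv ℝ f y z) x = (fderiv ℝ (fderiv ℝ f) x).flip z := by
    simpa using fderiv_clm_apply hdiff (differentiableAt_const z)
  rw [happly, happly]
  exact hf.isSymmSndFDerivAt (by simp) w v

theorem pdx_pdy_comm {f : ℝ × ℝ → ℝ} {p : ℝ × ℝ} (hf : ContDiffAt ℝ 2 f p) :
    pdx (pdy f) p = pdy (pdx f) p :=
  hf.fderiv_apply_comm (0, 1) (1, 0)

theorem pdx_neg (f : ℝ × ℝ → ℝ) : pdx (fun q => -f q) = fun q => -pdx f q :=
  funext fun q => by simp only [pdx, fderiv_fun_neg, neg_apply]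

theorem pdy_neg (f : ℝ × ℝ → ℝ) : pdy (fun q => -f q) = fun q => -pdy f q :=
  funext fun q => by simp only [pdy, fderiv_fun_neg, neg_apply]

theorem pdx_add_pdy_eq_zero_of_eventuallyEq {g h w : ℝ × ℝ → ℝ} {p : ℝ × ℝ}
    (hw : ContDiffAt ℝ 2 w p) (hg : g =ᶠ[𝓝 p] pdy w)
    (hh : h =ᶠ[𝓝 p] fun q => -pdx w q) :
    pdx g p + pdy h p = 0 := by
  have hgx : pdx g p = pdx (pdy w) p := by rw [pdx, pdx, hg.fderiv_eq]
  have hhy : pdy h p = -pdy (pdx w) p := by rw [pdy, hh.fderiv_eq, ← pdy, pdy_neg]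
  rw [hgx, hhy, pdx_pdy_comm hw, add_neg_cancel]

theorem beltrami_coeff_mul_grad {ux uy vx vy r t : ℝ} (hrt : r ^ 2 + t ^ 2 < 1)
    (hbel : ((ux - vy : ℝ) : ℂ) + ((vx + uy : ℝ) : ℂ) * Complex.I
      = ((r : ℂ) + (t : ℂ) * Complex.I)
        * (((ux + vy : ℝ) : ℂ) + ((vx - uy : ℝ) : ℂ) * Complex.I)) :
    (((r - 1) ^ 2 + t ^ 2) / (1 - r ^ 2 - t ^ 2) * ux
        + -(2 * t) / (1 - r ^ 2 - t ^ 2) * uy = vy ∧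
      -(2 * t) / (1 - r ^ 2 - t ^ 2) * ux
        + ((r + 1) ^ 2 + t ^ 2) / (1 - r ^ 2 - t ^ 2) * uy = -vx) ∧
    (((r - 1) ^ 2 + t ^ 2) / (1 - r ^ 2 - t ^ 2) * vx
        + -(2 * t) / (1 - r ^ 2 - t ^ 2) * vy = -uy ∧
      -(2 * t) / (1 - r ^ 2 - t ^ 2) * vx
        + ((r + 1) ^ 2 + t ^ 2) / (1 - r ^ 2 - t ^ 2) * vy = ux) := by
  obtain ⟨hre, him⟩ := Complex.ext_iff.mp hbel
  simp only [Complex.ofReal_sub, Complex.ofReal_add, Complex.add_re, Complex.sub_re,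
    Complex.ofReal_re, Complex.mul_re, Complex.I_re, mul_zero, Complex.add_im, Complex.ofReal_im,
    add_zero, Complex.I_im, mul_one, sub_self, Complex.sub_im, Complex.mul_im, zero_add] at hre him
  have hD : 1 - r ^ 2 - t ^ 2 ≠ 0 := by linarith
  refine ⟨⟨?_, ?_⟩, ?_, ?_⟩ <;> field_simp
  · linear_combination (1 - r) * hre - t * him
  · linear_combination -t * hre + (1 + r) * him
  · linear_combination t * hre + (1 - r) * him
  · linear_combination -(1 + r) * hre - t * him

/-- Let `U ⊆ ℝ²` be open, `u v ∈ C²(U)`, and `ρ, τ : U → ℝ` with `ρ² + τ² < 1` on `U`.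
If the Beltrami relation
`(u_x - v_y) + i(v_x + u_y) = (ρ + iτ)((u_x + v_y) + i(v_x - u_y))` holds on `U`, then
with `α₁ = ((ρ-1)² + τ²)/(1-ρ²-τ²)`, `α₂ = -2τ/(1-ρ²-τ²)`, `α₃ = ((ρ+1)² + τ²)/(1-ρ²-τ²)`
on `U`, we have `∇·(A∇u) = 0` and `∇·(A∇v) = 0` on `U`, i.e.
`∂x(α₁ u_x + α₂ u_y) + ∂y(α₂ u_x + α₃ u_y) = 0` and
`∂x(α₁ v_x + α₂ v_y) + ∂y(α₂ v_x + α₃ v_y) = 0` at every point of `U`. -/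
theorem lbs_divergence_form_equations
    (U : Set (ℝ × ℝ)) (hU : IsOpen U)
    (u v : ℝ × ℝ → ℝ)
    (hu : ContDiffOn ℝ 2 u U) (hv : ContDiffOn ℝ 2 v U)
    (ρ τ α₁ α₂ α₃ : ℝ × ℝ → ℝ)
    (hρτ : ∀ p ∈ U, ρ p ^ 2 + τ p ^ 2 < 1)
    (hbel : ∀ p ∈ U,
      ((pdx u p - pdy v p : ℝ) : ℂ) + ((pdx v p + pdy u p : ℝ) : ℂ) * Complex.I
        = (((ρ p : ℝ) : ℂ) + ((τ p : ℝ) : ℂ) * Complex.I)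
          * (((pdx u p + pdy v p : ℝ) : ℂ)
              + ((pdx v p - pdy u p : ℝ) : ℂ) * Complex.I))
    (hα₁ : ∀ p ∈ U, α₁ p = ((ρ p - 1) ^ 2 + τ p ^ 2) / (1 - ρ p ^ 2 - τ p ^ 2))
    (hα₂ : ∀ p ∈ U, α₂ p = -(2 * τ p) / (1 - ρ p ^ 2 - τ p ^ 2))
    (hα₃ : ∀ p ∈ U, α₃ p = ((ρ p + 1) ^ 2 + τ p ^ 2) / (1 - ρ p ^ 2 - τ p ^ 2)) :
    ∀ p ∈ U,
      (pdx (fun q => α₁ q * pdx u q + α₂ q * pdy u q) p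
        + pdy (fun q => α₂ q * pdx u q + α₃ q * pdy u q) p = 0) ∧
      (pdx (fun q => α₁ q * pdx v q + α₂ q * pdy v q) p
        + pdy (fun q => α₂ q * pdx v q + α₃ q * pdy v q) p = 0) := by
  intro p hp
  have hA : ∀ q ∈ U,
      (α₁ q * pdx u q + α₂ q * pdy u q = pdy v q ∧
        α₂ q * pdx u q + α₃ q * pdy u q = -pdx v q) ∧
      (α₁ q * pdx v q + α₂ q * pdy v q = -pdy u q ∧
        α₂ q * pdx v q + α₃ q * pdy v q = pdx u q) := fun q hq => by
    rw [hα₁ q hq, hα₂ q hq, hα₃ q hq]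
    exact beltrami_coeff_mul_grad (hρτ q hq) (hbel q hq)
  have hUp : U ∈ 𝓝 p := hU.mem_nhds hp
  constructor
  · exact pdx_add_pdy_eq_zero_of_eventuallyEq (hv.contDiffAt hUp)
      (eventually_of_mem hUp fun q hq => (hA q hq).1.1)
      (eventually_of_mem hUp fun q hq => (hA q hq).1.2)
  · exact pdx_add_pdy_eq_zero_of_eventuallyEq (hu.contDiffAt hUp).neg
      (eventually_of_mem hUp fun q hq => by simp only [pdy_neg]; exact (hA q hq).2.1)
      (eventually_of_mem hUp fun q hq => by simp only [pdx_neg, neg_neg]; exact (hA q hq).2.2)
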